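/- arXiv:math/9911092 — 9 statements merged into one kernel-verified Lean document; each statement's English description precedes it below -/
import Mathlib

section
/- Let G = G₊G₋ be a unique factorization of a group and let ξ : G₊ → G₋ be a group homomorphism. Define G₊' = {u·ξ(u⁻¹) : u ∈ G₊} ⊆ G. If G₊' is a subgroup of G, then for all u, v ∈ G₊ the identity ξ(u(^{ξ(u⁻¹)}v))⁻¹ = (ξ(u⁻¹)^{v})·ξ(v⁻¹) holds, where the dressing actions ^{x}u ∈ G₊ and x^{u} ∈ G₋ are defined by xu = (^{x}u)(x^{u}) for x ∈ G₋, u ∈ G₊. -/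
/-- Let `G = G₊G₋` be a unique factorization and `ξ : G₊ → G₋` a homomorphism.
If `G₊' = {u·ξ(u)⁻¹ : u ∈ G₊}` is a subgroup of `G`, then for all `u v ∈ G₊`,
writing `ξ(u)⁻¹·v = a·x` with `a = ^{ξ(u⁻¹)}v ∈ G₊` and `x = ξ(u⁻¹)^{v} ∈ G₋`,
one has `ξ(u·(^{ξ(u⁻¹)}v))⁻¹ = (ξ(u⁻¹)^{v})·ξ(v⁻¹)`. -/
theorem stmt5 {G : Type*} [Group G] (Gp Gm : Subgroup G)
    (hUF : Function.Bijective (fun p : Gp × Gm => ((p.1 : G) * (p.2 : G))))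
    (ξ : Gp →* Gm)
    (hsub : ∃ H : Subgroup G,
      (H : Set G) = {g : G | ∃ u : Gp, g = (u : G) * ((ξ u : G))⁻¹}) :
    ∀ u v : Gp, ∀ (a : Gp) (x : Gm),
      ((ξ u : G))⁻¹ * (v : G) = (a : G) * (x : G) →
      ((ξ (u * a) : G))⁻¹ = (x : G) * ((ξ v : G))⁻¹ := by
  obtain ⟨H, hH⟩ := hsub
  intro u v a x hax
  have hmem : ∀ w : Gp, (w : G) * ((ξ w : G))⁻¹ ∈ H := by
    intro w
    have : (w : G) * ((ξ w : G))⁻¹ ∈ (H : Set G) := by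
      rw [hH]; exact ⟨w, rfl⟩
    exact this
  have hprod : ((u : G) * ((ξ u : G))⁻¹) * ((v : G) * ((ξ v : G))⁻¹) ∈ H :=
    H.mul_mem (hmem u) (hmem v)
  have hprod' : ((u : G) * ((ξ u : G))⁻¹) * ((v : G) * ((ξ v : G))⁻¹)
      ∈ {g : G | ∃ w : Gp, g = (w : G) * ((ξ w : G))⁻¹} := by
    rw [← hH]; exact hprod
  obtain ⟨w, hw⟩ := hprod'
  have key : (fun p : Gp × Gm => ((p.1 : G) * (p.2 : G))) (u * a, x * (ξ v)⁻¹)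
      = (fun p : Gp × Gm => ((p.1 : G) * (p.2 : G))) (w, (ξ w)⁻¹) := by
    simp only [Subgroup.coe_mul, Subgroup.coe_inv]
    calc (u : G) * a * (x * ((ξ v : G))⁻¹)
        = (u : G) * ((a : G) * x) * ((ξ v : G))⁻¹ := by group
      _ = (u : G) * (((ξ u : G))⁻¹ * v) * ((ξ v : G))⁻¹ := by rw [← hax]
      _ = ((u : G) * ((ξ u : G))⁻¹) * ((v : G) * ((ξ v : G))⁻¹) := by group
      _ = (w : G) * ((ξ w : G))⁻¹ := hw
  have heq := hUF.injective key
  have h1 : u * a = w := (Prod.ext_iff.mp heq).1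
  have h2 : x * (ξ v)⁻¹ = (ξ w)⁻¹ := (Prod.ext_iff.mp heq).2
  have : ξ (u * a) = ξ w := by rw [h1]
  rw [this]
  have := congrArg (fun z : Gm => (z : G)) h2
  simpa using this.symm
end

section
/- Let G = G₊G₋ be a unique factorization of a group and ξ, η : G₊ → G₋ two group homomorphisms. If ξ(u)^{v} = ξ(u^{η(v)}) holds for all u, v ∈ G₊, then ^{v}ξ(u) = ξ(^{η(v)}u) holds for all u, v ∈ G₊. -/
/-- For a unique factorization `G = G₊G₋` with dressing actions
`x·u = (^{x}u)(x^{u})` and `u·x = (^{u}x)(u^{x})`, and homomorphisms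
`ξ, η : G₊ → G₋` : if `ξ(u)^{v} = ξ(u^{η(v)})` for all `u, v ∈ G₊`, then
`^{v}ξ(u) = ξ(^{η(v)}u)` for all `u, v ∈ G₊`. -/
theorem stmt8 {G : Type*} [Group G] (Gp Gm : Subgroup G)
    (hUF : Function.Bijective (fun p : Gp × Gm => ((p.1 : G) * (p.2 : G))))
    (hUF' : Function.Bijective (fun p : Gm × Gp => ((p.1 : G) * (p.2 : G))))
    (lact : Gm → Gp → Gp) (lrem : Gm → Gp → Gm)
    (uact : Gp → Gm → Gm) (ract : Gp → Gm → Gp)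
    (hl : ∀ (x : Gm) (u : Gp), (x : G) * (u : G) = (lact x u : G) * (lrem x u : G))
    (hr : ∀ (u : Gp) (x : Gm), (u : G) * (x : G) = (uact u x : G) * (ract u x : G))
    (ξ η : Gp →* Gm)
    (h5 : ∀ u v : Gp, lrem (ξ u) v = ξ (ract u (η v))) :
    ∀ u v : Gp, uact v (ξ u) = ξ (lact (η v) u) := by
  have injpm : ∀ (a c : Gp) (b d : Gm), (a : G) * b = (c : G) * d → a = c ∧ b = d := by
    intro a c b d h
    have := hUF.injective (a₁ := (a, b)) (a₂ := (c, d)) h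
    exact ⟨congrArg Prod.fst this, congrArg Prod.snd this⟩
  have injmp : ∀ (a c : Gm) (b d : Gp), (a : G) * b = (c : G) * d → a = c ∧ b = d := by
    intro a c b d h
    have := hUF'.injective (a₁ := (a, b)) (a₂ := (c, d)) h
    exact ⟨congrArg Prod.fst this, congrArg Prod.snd this⟩
  intro u v
  -- Step 1: uact v (ξ u) = (lrem (ξ u⁻¹) v⁻¹)⁻¹
  have e1 : (v : G) * (ξ u : G) =
      ((lrem (ξ u⁻¹) v⁻¹)⁻¹ : Gm) * ((lact (ξ u⁻¹) v⁻¹)⁻¹ : Gp) := by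
    have h := hl (ξ u⁻¹) v⁻¹
    have h' := congrArg (·⁻¹) h
    simp only [mul_inv_rev] at h'
    simpa [map_inv] using h'
  have key1 : uact v (ξ u) = (lrem (ξ u⁻¹) v⁻¹)⁻¹ := by
    have := injmp (uact v (ξ u)) ((lrem (ξ u⁻¹) v⁻¹)⁻¹) (ract v (ξ u))
      ((lact (ξ u⁻¹) v⁻¹)⁻¹) ((hr v (ξ u)).symm.trans e1)
    exact this.1
  -- Step 2: lact (η v) u = (ract u⁻¹ (η v)⁻¹)⁻¹
  have e2 : ((η v : Gm) : G) * (u : G) =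
      ((ract u⁻¹ ((η v)⁻¹))⁻¹ : Gp) * ((uact u⁻¹ ((η v)⁻¹))⁻¹ : Gm) := by
    have h := hr u⁻¹ ((η v)⁻¹)
    have h' := congrArg (·⁻¹) h
    simp only [mul_inv_rev] at h'
    simpa using h'
  have key2 : lact (η v) u = (ract u⁻¹ ((η v)⁻¹))⁻¹ := by
    have := injpm (lact (η v) u) ((ract u⁻¹ ((η v)⁻¹))⁻¹) (lrem (η v) u)
      ((uact u⁻¹ ((η v)⁻¹))⁻¹) ((hl (η v) u).symm.trans e2)
    exact this.1
  rw [key1, key2, h5 u⁻¹ v⁻¹, ← map_inv, map_inv η, map_inv ξ]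
end

section
/- Let Γ be a groupoid over a base set B with source map α and target map β. A subset L ⊆ Γ admits a subset K ⊆ Γ with L·K = E_Γ and K·L = E_Γ (where the product of subsets L₁L₂ = {γ₁γ₂ : γ₁ ∈ L₁, γ₂ ∈ L₂, β(γ₁) = α(γ₂)} and E_Γ = {e_b : b ∈ B} is the set of identity arrows) if and only if the restrictions α|_L : L → B and β|_L : L → B are both bijections. -/
/-- A groupoid over a base set `B` with total space `Γ`, in the set-theoretic
formulation: source `src`, target `tgt`, partial product `comp` (defined when
the target of the first arrow equals the source of the second), identities
`ident`, and inversion `inv`. -/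
structure SetGroupoid (Γ B : Type*) where
  src : Γ → B
  tgt : Γ → B
  comp : (g h : Γ) → tgt g = src h → Γ
  ident : B → Γ
  inv : Γ → Γ
  src_comp : ∀ (g h : Γ) (hc : tgt g = src h), src (comp g h hc) = src g
  tgt_comp : ∀ (g h : Γ) (hc : tgt g = src h), tgt (comp g h hc) = tgt h
  src_ident : ∀ b : B, src (ident b) = b
  tgt_ident : ∀ b : B, tgt (ident b) = b
  src_inv : ∀ g : Γ, src (inv g) = tgt g
  tgt_inv : ∀ g : Γ, tgt (inv g) = src g
  comp_assoc : ∀ (g h k : Γ) (h1 : tgt g = src h) (h2 : tgt h = src k),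
    comp (comp g h h1) k ((tgt_comp g h h1).trans h2) =
      comp g (comp h k h2) (h1.trans (src_comp h k h2).symm)
  ident_comp : ∀ g : Γ, comp (ident (src g)) g (tgt_ident (src g)) = g
  comp_ident : ∀ g : Γ, comp g (ident (tgt g)) (src_ident (tgt g)).symm = g
  inv_comp : ∀ g : Γ, comp (inv g) g (tgt_inv g) = ident (tgt g)
  comp_inv : ∀ g : Γ, comp g (inv g) (src_inv g).symm = ident (src g)

/-- The product of two subsets of a groupoid:
`L₁L₂ = {γ₁γ₂ : γ₁ ∈ L₁, γ₂ ∈ L₂, β(γ₁) = α(γ₂)}`. -/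
def SetGroupoid.sprod {Γ B : Type*} (S : SetGroupoid Γ B) (L1 L2 : Set Γ) : Set Γ :=
  {g : Γ | ∃ g1 ∈ L1, ∃ g2 ∈ L2, ∃ hc : S.tgt g1 = S.src g2, g = S.comp g1 g2 hc}

/-- The set `E_Γ = {e_b : b ∈ B}` of identity arrows. -/
def SetGroupoid.unitSet {Γ B : Type*} (S : SetGroupoid Γ B) : Set Γ :=
  Set.range S.ident

namespace SetGroupoid
variable {Γ B : Type*} (S : SetGroupoid Γ B)

theorem comp_congr {g g' a a' : Γ} (hg : g = g') (ha : a = a')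
    (h : S.tgt g = S.src a) :
    S.comp g a h = S.comp g' a' (hg ▸ ha ▸ h) := by subst hg; subst ha; rfl

theorem left_inv_unique {k g : Γ} {b : B} (hc : S.tgt k = S.src g)
    (hk : S.comp k g hc = S.ident b) : k = S.inv g := by
  have hb : S.tgt g = b := by
    have := S.tgt_comp k g hc
    rw [hk, S.tgt_ident] at this; exact this.symm
  subst hb
  calc k = S.comp k (S.ident (S.tgt k)) (S.src_ident (S.tgt k)).symm :=
        (S.comp_ident k).symm
    _ = S.comp k (S.comp g (S.inv g) (S.src_inv g).symm)
          (by rw [S.src_comp]; exact hc) :=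
        S.comp_congr rfl ((congrArg S.ident hc).trans (S.comp_inv g).symm) _
    _ = S.comp (S.comp k g hc) (S.inv g) (by rw [S.tgt_comp, S.src_inv]) :=
        (S.comp_assoc k g (S.inv g) hc (S.src_inv g).symm).symm
    _ = S.comp (S.ident (S.src (S.inv g))) (S.inv g) (S.tgt_ident _) := by
        refine S.comp_congr (hk.trans ?_) rfl _
        exact congrArg S.ident (S.src_inv g).symm
    _ = S.inv g := S.ident_comp (S.inv g)

theorem right_inv_unique {g k : Γ} {b : B} (hc : S.tgt g = S.src k)
    (hk : S.comp g k hc = S.ident b) : k = S.inv g := by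
  have hb : S.src g = b := by
    have := S.src_comp g k hc
    rw [hk, S.src_ident] at this; exact this.symm
  subst hb
  calc k = S.comp (S.ident (S.src k)) k (S.tgt_ident (S.src k)) :=
        (S.ident_comp k).symm
    _ = S.comp (S.comp (S.inv g) g (S.tgt_inv g)) k
          (by rw [S.tgt_comp]; exact hc) :=
        S.comp_congr ((congrArg S.ident hc.symm).trans (S.inv_comp g).symm) rfl _
    _ = S.comp (S.inv g) (S.comp g k hc) (by rw [S.src_comp, S.tgt_inv]) :=
        S.comp_assoc (S.inv g) g k (S.tgt_inv g) hc
    _ = S.comp (S.inv g) (S.ident (S.tgt (S.inv g)))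
          (S.src_ident (S.tgt (S.inv g))).symm := by
        refine S.comp_congr rfl (hk.trans ?_) _
        exact congrArg S.ident (S.tgt_inv g).symm
    _ = S.inv g := S.comp_ident (S.inv g)

theorem inv_inv (g : Γ) : S.inv (S.inv g) = g :=
  (S.left_inv_unique (S.src_inv g).symm (S.comp_inv g)).symm

end SetGroupoid

/-- A subset `L ⊆ Γ` of a groupoid admits a subset `K` with `LK = E_Γ = KL`
iff the restrictions of the source and target maps to `L` are bijections onto `B`. -/
theorem stmt9 {Γ B : Type*} (S : SetGroupoid Γ B) (L : Set Γ) :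
    (∃ K : Set Γ, S.sprod L K = S.unitSet ∧ S.sprod K L = S.unitSet) ↔
      (Function.Bijective (fun x : L => S.src x) ∧
        Function.Bijective (fun x : L => S.tgt x)) := by
  constructor
  · rintro ⟨K, hLK, hKL⟩
    -- key facts
    have srcSurj : ∀ b : B, ∃ g ∈ L, S.src g = b := by
      intro b
      have hb : S.ident b ∈ S.sprod L K := by rw [hLK]; exact ⟨b, rfl⟩
      obtain ⟨g, hg, k, hk, hc, he⟩ := hb
      refine ⟨g, hg, ?_⟩
      have := S.src_comp g k hc
      rw [← he, S.src_ident] at this; exact this.symm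
    have tgtSurj : ∀ b : B, ∃ g ∈ L, S.tgt g = b := by
      intro b
      have hb : S.ident b ∈ S.sprod K L := by rw [hKL]; exact ⟨b, rfl⟩
      obtain ⟨k, hk, g, hg, hc, he⟩ := hb
      refine ⟨g, hg, ?_⟩
      have := S.tgt_comp k g hc
      rw [← he, S.tgt_ident] at this; exact this.symm
    -- src injectivity on L
    have srcInj : ∀ g ∈ L, ∀ g' ∈ L, S.src g = S.src g' → g = g' := by
      intro g hgL g' hg'L hss
      obtain ⟨g0, hg0, k0, hk0, hc0, he0⟩ :
          S.ident (S.src g) ∈ S.sprod L K := by rw [hLK]; exact ⟨_, rfl⟩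
      have hs0 : S.src g0 = S.src g := by
        have := S.src_comp g0 k0 hc0
        rw [← he0, S.src_ident] at this; exact this.symm
      have hk0inv : k0 = S.inv g0 := S.right_inv_unique hc0 he0.symm
      have claim : ∀ h ∈ L, S.src h = S.src g → h = g0 := by
        intro h hhL hsh
        have hcc : S.tgt (S.inv g0) = S.src h := by rw [S.tgt_inv, hs0, hsh]
        have hmem : S.comp (S.inv g0) h hcc ∈ S.unitSet := by
          rw [← hKL]
          exact ⟨S.inv g0, hk0inv ▸ hk0, h, hhL, hcc, rfl⟩
        obtain ⟨c, hc⟩ := hmem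
        have hinv : S.inv g0 = S.inv h := S.left_inv_unique hcc hc.symm
        have := congrArg S.inv hinv
        rw [S.inv_inv, S.inv_inv] at this
        exact this.symm
      rw [claim g hgL rfl, claim g' hg'L hss.symm]
    -- tgt injectivity on L
    have tgtInj : ∀ g ∈ L, ∀ g' ∈ L, S.tgt g = S.tgt g' → g = g' := by
      intro g hgL g' hg'L hss
      obtain ⟨k0, hk0, g0, hg0, hc0, he0⟩ :
          S.ident (S.tgt g) ∈ S.sprod K L := by rw [hKL]; exact ⟨_, rfl⟩
      have hs0 : S.tgt g0 = S.tgt g := by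
        have := S.tgt_comp k0 g0 hc0
        rw [← he0, S.tgt_ident] at this; exact this.symm
      have hk0inv : k0 = S.inv g0 := S.left_inv_unique hc0 he0.symm
      have claim : ∀ h ∈ L, S.tgt h = S.tgt g → h = g0 := by
        intro h hhL hsh
        have hcc : S.tgt h = S.src (S.inv g0) := by rw [S.src_inv, hs0, hsh]
        have hmem : S.comp h (S.inv g0) hcc ∈ S.unitSet := by
          rw [← hLK]
          exact ⟨h, hhL, S.inv g0, hk0inv ▸ hk0, hcc, rfl⟩
        obtain ⟨c, hc⟩ := hmem
        have hinv : S.inv g0 = S.inv h := S.right_inv_unique hcc hc.symm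
        have := congrArg S.inv hinv
        rw [S.inv_inv, S.inv_inv] at this
        exact this.symm
      rw [claim g hgL rfl, claim g' hg'L hss.symm]
    constructor
    · constructor
      · rintro ⟨g, hg⟩ ⟨g', hg'⟩ h
        exact Subtype.ext (srcInj g hg g' hg' h)
      · intro b
        obtain ⟨g, hg, hb⟩ := srcSurj b
        exact ⟨⟨g, hg⟩, hb⟩
    · constructor
      · rintro ⟨g, hg⟩ ⟨g', hg'⟩ h
        exact Subtype.ext (tgtInj g hg g' hg' h)
      · intro b
        obtain ⟨g, hg, hb⟩ := tgtSurj b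
        exact ⟨⟨g, hg⟩, hb⟩
  · rintro ⟨⟨sInj, sSurj⟩, ⟨tInj, tSurj⟩⟩
    refine ⟨S.inv '' L, ?_, ?_⟩
    · apply Set.Subset.antisymm
      · rintro x ⟨g, hg, k, ⟨h, hh, rfl⟩, hc, rfl⟩
        have hth : S.tgt g = S.tgt h := by rw [hc, S.src_inv]
        have : (⟨g, hg⟩ : L) = ⟨h, hh⟩ := tInj hth
        have hgh : g = h := congrArg Subtype.val this
        subst hgh
        refine ⟨S.src g, ?_⟩
        exact (S.comp_inv g).symm
      · rintro x ⟨b, rfl⟩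
        obtain ⟨⟨g, hg⟩, hb⟩ := sSurj b
        simp only at hb
        refine ⟨g, hg, S.inv g, ⟨g, hg, rfl⟩, (S.src_inv g).symm, ?_⟩
        rw [S.comp_inv, hb]
    · apply Set.Subset.antisymm
      · rintro x ⟨k, ⟨h, hh, rfl⟩, g, hg, hc, rfl⟩
        have hsh : S.src h = S.src g := by rw [← S.tgt_inv, hc]
        have : (⟨h, hh⟩ : L) = ⟨g, hg⟩ := sInj hsh
        have hgh : h = g := congrArg Subtype.val this
        subst hgh
        refine ⟨S.tgt h, ?_⟩
        exact (S.inv_comp h).symm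
      · rintro x ⟨b, rfl⟩
        obtain ⟨⟨g, hg⟩, hb⟩ := tSurj b
        simp only at hb
        refine ⟨S.inv g, ⟨g, hg, rfl⟩, g, hg, S.tgt_inv g, ?_⟩
        rw [S.inv_comp, hb]
end

section
/- Let G = G₊G₋ be a unique factorization of a group. Define on the set G the structure of a groupoid Γ₊ over G₊ with source α(g) = g₊ (the G₊-part of g in G = G₊G₋), target β(g) = ḡ₊ (the G₊-part of g in G = G₋G₊), product μ(g,h) = g·h₋ defined when ḡ₊ = h₊, identities e(g₊) = g₊, and inverse σ(g) = ḡ₊·g₋⁻¹. Then these data satisfy the groupoid axioms: α(gh₋) = α(g), β(gh₋) = β(h), associativity of the partial product, unit laws, and σ(g) is a two-sided inverse of g. -/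
/-- For a unique factorization `G = G₊G₋` (with components `g = p(g)·m(g)`,
`p(g) ∈ G₊`, `m(g) ∈ G₋`, and `g = mb(g)·pb(g)`, `mb(g) ∈ G₋`, `pb(g) ∈ G₊`),
the data `α(g) = p(g)`, `β(g) = pb(g)`, `μ(g,h) = g·m(h)` (when `pb(g) = p(h)`),
`e(g₊) = g₊`, `σ(g) = pb(g)·m(g)⁻¹` satisfy the groupoid axioms over `G₊`. -/
theorem stmt11 {G : Type*} [Group G] (Gp Gm : Subgroup G)
    (hUF : Function.Bijective (fun q : Gp × Gm => ((q.1 : G) * (q.2 : G))))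
    (hUF' : Function.Bijective (fun q : Gm × Gp => ((q.1 : G) * (q.2 : G))))
    (p : G → Gp) (m : G → Gm) (pb : G → Gp) (mb : G → Gm)
    (hpm : ∀ g : G, (p g : G) * (m g : G) = g)
    (hbb : ∀ g : G, (mb g : G) * (pb g : G) = g) :
    -- compatibility of source and target with the product
    (∀ g h : G, pb g = p h → p (g * (m h : G)) = p g) ∧
    (∀ g h : G, pb g = p h → pb (g * (m h : G)) = pb h) ∧
    -- associativity of the partial product
    (∀ g h k : G, pb g = p h → pb h = p k →
      (g * (m h : G)) * (m k : G) = g * (m (h * (m k : G)) : G)) ∧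
    -- identities: sources and targets of identity arrows
    (∀ b : Gp, p (b : G) = b ∧ pb (b : G) = b) ∧
    -- unit laws: `μ(e_{α(g)}, g) = g` and `μ(g, e_{β(g)}) = g`
    (∀ g : G, (p g : G) * (m g : G) = g ∧ g * (m ((pb g : G)) : G) = g) ∧
    -- sources and targets of inverses
    (∀ g : G, p ((pb g : G) * ((m g : G))⁻¹) = pb g ∧
      pb ((pb g : G) * ((m g : G))⁻¹) = p g) ∧
    -- `σ(g)` is a two-sided inverse: `μ(g, σ(g)) = e_{α(g)}`, `μ(σ(g), g) = e_{β(g)}`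
    (∀ g : G, g * (m ((pb g : G) * ((m g : G))⁻¹) : G) = (p g : G) ∧
      ((pb g : G) * ((m g : G))⁻¹) * (m g : G) = (pb g : G)) := by

  -- uniqueness lemmas
  have hP : ∀ (a : Gp) (b : Gm), p ((a : G) * b) = a ∧ m ((a : G) * b) = b := by
    intro a b
    have h := hUF.injective (a₁ := (p ((a : G) * b), m ((a : G) * b))) (a₂ := (a, b))
      (by simpa using hpm ((a : G) * b))
    exact ⟨congrArg Prod.fst h, congrArg Prod.snd h⟩
  have hB : ∀ (a : Gm) (b : Gp), mb ((a : G) * b) = a ∧ pb ((a : G) * b) = b := by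
    intro a b
    have h := hUF'.injective (a₁ := (mb ((a : G) * b), pb ((a : G) * b))) (a₂ := (a, b))
      (by simpa using hbb ((a : G) * b))
    exact ⟨congrArg Prod.fst h, congrArg Prod.snd h⟩
  have hp1 : ∀ g h : G, p (g * (m h : G)) = p g ∧ m (g * (m h : G)) = m g * m h := by
    intro g h
    have : g * (m h : G) = (p g : G) * ((m g * m h : Gm) : G) := by
      push_cast; rw [← mul_assoc, hpm]
    rw [this]; exact hP _ _
  refine ⟨?_, ?_, ?_, ?_, ?_, ?_, ?_⟩
  · intro g h _; exact (hp1 g h).1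
  · intro g h hgh
    have key : g * (m h : G) = ((mb g * mb h : Gm) : G) * (pb h : G) := by
      push_cast
      calc g * (m h : G) = (mb g : G) * (pb g : G) * (m h : G) := by rw [hbb]
        _ = (mb g : G) * ((p h : G) * (m h : G)) := by rw [hgh, mul_assoc]
        _ = (mb g : G) * ((mb h : G) * (pb h : G)) := by rw [hpm, hbb]
        _ = (mb g : G) * (mb h : G) * (pb h : G) := by rw [mul_assoc]
    rw [key]; exact (hB _ _).2
  · intro g h k _ _
    rw [(hp1 h k).2]; push_cast; rw [mul_assoc]
  · intro b
    constructor
    · have : (b : G) = (b : G) * ((1 : Gm) : G) := by simp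
      rw [this]; exact (hP b 1).1
    · have : (b : G) = ((1 : Gm) : G) * (b : G) := by simp
      rw [this]; exact (hB 1 b).2
  · intro g
    refine ⟨hpm g, ?_⟩
    have h1 : ((pb g : G)) = ((pb g : G)) * ((1 : Gm) : G) := by simp
    have : m ((pb g : G)) = 1 := by rw [h1]; exact (hP (pb g) 1).2
    rw [this]; simp
  · intro g
    have key : (pb g : G) * ((m g : G))⁻¹ = ((mb g)⁻¹ : Gm) * (p g : G) := by
      have : (mb g : G) * (pb g : G) = (p g : G) * (m g : G) := by rw [hbb, hpm]
      push_cast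
      rw [eq_inv_mul_iff_mul_eq, ← mul_assoc, this, mul_assoc, mul_inv_cancel, mul_one]
    constructor
    · have : (pb g : G) * ((m g : G))⁻¹ = (pb g : G) * (((m g)⁻¹ : Gm) : G) := by push_cast; ring_nf
      rw [this]; exact (hP _ _).1
    · rw [key]; exact (hB _ _).2
  · intro g
    have hm : m ((pb g : G) * ((m g : G))⁻¹) = (m g)⁻¹ := by
      have : (pb g : G) * ((m g : G))⁻¹ = (pb g : G) * (((m g)⁻¹ : Gm) : G) := by push_cast; ring_nf
      rw [this]; exact (hP _ _).2
    constructor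
    · rw [hm]
      have h2 : g * ((m g : G))⁻¹ = (p g : G) := by
        rw [mul_inv_eq_iff_eq_mul]; exact (hpm g).symm
      simpa using h2
    · group
end

section
/- Let G = G₊G₋ be a unique factorization of a finite group and ξ, η : G₊ → G₋ group homomorphisms satisfying the conditions: ξ(u)^{v} = ξ(u^{η(v)}), ^{u}η(v) = η(^{ξ(u)}v), uv = (^{ξ(u)}v)(u^{η(v)}), ξ(^{x}u)(x^{u}) = x·ξ(u), and η(^{x}u)(x^{u}) = x·η(u), for all u,v ∈ G₊ and x ∈ G₋. Then the subset G₊' = {u·ξ(u)⁻¹ : u ∈ G₊} is a normal subgroup of G, the subset G₊'' = {η(u)⁻¹·u : u ∈ G₊} is a normal subgroup of G, and the map F : G₊' → G₊'' defined by F(u·ξ(u)⁻¹) = η(u)·u⁻¹ is a group isomorphism. -/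
/-- Let `G = G₊G₋` be a unique factorization of a finite group, with dressing
actions `x·u = (^{x}u)(x^{u})` ( `lact x u = ^{x}u ∈ G₊`, `lrem x u = x^{u} ∈ G₋` )
and `u·x = (^{u}x)(u^{x})` ( `uact u x = ^{u}x ∈ G₋`, `ract u x = u^{x} ∈ G₊` ).
Let `ξ, η : G₊ → G₋` be homomorphisms satisfying
`ξ(u)^{v} = ξ(u^{η(v)})`, `^{u}η(v) = η(^{ξ(u)}v)`, `uv = (^{ξ(u)}v)(u^{η(v)})`,
`ξ(^{x}u)(x^{u}) = x·ξ(u)` and `η(^{x}u)(x^{u}) = x·η(u)`.  Then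
`G₊' = {u·ξ(u)⁻¹}` and `G₊'' = {η(u)⁻¹·u}` are normal subgroups of `G` and
`F : G₊' → G₊''`, `F(u·ξ(u)⁻¹) = η(u)·u⁻¹`, is a group isomorphism. -/
theorem stmt12 {G : Type*} [Group G] [Finite G] (Gp Gm : Subgroup G)
    (hUF : Function.Bijective (fun q : Gp × Gm => ((q.1 : G) * (q.2 : G))))
    (hUF' : Function.Bijective (fun q : Gm × Gp => ((q.1 : G) * (q.2 : G))))
    (lact : Gm → Gp → Gp) (lrem : Gm → Gp → Gm)
    (uact : Gp → Gm → Gm) (ract : Gp → Gm → Gp)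
    (hl : ∀ (x : Gm) (u : Gp), (x : G) * (u : G) = (lact x u : G) * (lrem x u : G))
    (hr : ∀ (u : Gp) (x : Gm), (u : G) * (x : G) = (uact u x : G) * (ract u x : G))
    (ξ η : Gp →* Gm)
    (h5 : ∀ u v : Gp, lrem (ξ u) v = ξ (ract u (η v)))
    (h6 : ∀ u v : Gp, uact u (η v) = η (lact (ξ u) v))
    (h7 : ∀ u v : Gp, (u : G) * (v : G) = (lact (ξ u) v : G) * (ract u (η v) : G))
    (h8 : ∀ (x : Gm) (u : Gp), (ξ (lact x u) : G) * (lrem x u : G) = (x : G) * (ξ u : G))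
    (h9 : ∀ (x : Gm) (u : Gp), (η (lact x u) : G) * (lrem x u : G) = (x : G) * (η u : G)) :
    ∃ H H' : Subgroup G, H.Normal ∧ H'.Normal ∧
      (H : Set G) = {g : G | ∃ u : Gp, g = (u : G) * ((ξ u : G))⁻¹} ∧
      (H' : Set G) = {g : G | ∃ u : Gp, g = ((η u : G))⁻¹ * (u : G)} ∧
      ∃ F : H ≃* H', ∀ (u : Gp) (hu : (u : G) * ((ξ u : G))⁻¹ ∈ H),
        ((F ⟨(u : G) * ((ξ u : G))⁻¹, hu⟩ : H') : G) = (η u : G) * ((u : G))⁻¹ := by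
  classical
  -- solved forms of the refactorization identities
  have hlL : ∀ (x : Gm) (u : Gp), (lrem x u : G) =
      (lact x u : G)⁻¹ * ((x : G) * (u : G)) := by
    intro x u; rw [hl]; group
  have h7L : ∀ u v : Gp, (lact (ξ u) v : G) =
      ((u : G) * (v : G)) * (ract u (η v) : G)⁻¹ := by
    intro u v; rw [h7]; group
  have h7Lp : ∀ u v : Gp, lact (ξ u) v = u * v * (ract u (η v))⁻¹ := by
    intro u v
    apply Subtype.coe_injective
    push_cast
    exact h7L u v
  -- multiplication rules
  have mulH : ∀ u v : Gp,
      ((u : G) * ((ξ u : G))⁻¹) * ((v : G) * ((ξ v : G))⁻¹) =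
      ((v * (ract (u⁻¹) (η v))⁻¹ : Gp) : G) *
        ((ξ (v * (ract (u⁻¹) (η v))⁻¹) : G))⁻¹ := by
    intro u v
    simp only [map_mul, map_inv]
    push_cast
    rw [← h5 u⁻¹ v, hlL (ξ (u⁻¹)) v, h7Lp (u⁻¹) v]
    push_cast [map_inv]
    group
  have mulψ : ∀ u v : Gp,
      ((η u : G) * ((u : G))⁻¹) * ((η v : G) * ((v : G))⁻¹) =
      ((η (v * (ract (u⁻¹) (η v))⁻¹) : G)) *
        (((v * (ract (u⁻¹) (η v))⁻¹ : Gp) : G))⁻¹ := by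
    intro u v
    calc ((η u : G) * ((u : G))⁻¹) * ((η v : G) * ((v : G))⁻¹)
        = (η u : G) * (((u⁻¹ : Gp) : G) * (η v : G)) * ((v : G))⁻¹ := by
          push_cast; group
      _ = (η u : G) * ((uact (u⁻¹) (η v) : G) * (ract (u⁻¹) (η v) : G)) * ((v : G))⁻¹ := by
          rw [hr]
      _ = ((η (v * (ract (u⁻¹) (η v))⁻¹) : G)) *
            (((v * (ract (u⁻¹) (η v))⁻¹ : Gp) : G))⁻¹ := by
          rw [h6, h7Lp]
          push_cast [map_mul, map_inv]
          group
  have mulχ : ∀ u v : Gp,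
      (((η u : G))⁻¹ * (u : G)) * (((η v : G))⁻¹ * (v : G)) =
      ((η (ract u (η (v⁻¹)) * v) : G))⁻¹ * ((ract u (η (v⁻¹)) * v : Gp) : G) := by
    intro u v
    calc (((η u : G))⁻¹ * (u : G)) * (((η v : G))⁻¹ * (v : G))
        = ((η u : G))⁻¹ * ((u : G) * ((η (v⁻¹) : Gm) : G)) * (v : G) := by
          push_cast [map_inv]; group
      _ = ((η u : G))⁻¹ * ((uact u (η (v⁻¹)) : G) * (ract u (η (v⁻¹)) : G)) * (v : G) := by
          rw [hr]
      _ = ((η (ract u (η (v⁻¹)) * v) : G))⁻¹ * ((ract u (η (v⁻¹)) * v : Gp) : G) := by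
          rw [h6, h7Lp]
          push_cast [map_mul, map_inv]
          group
  -- inverses
  have invH : ∀ u : Gp,
      ((u : G) * ((ξ u : G))⁻¹)⁻¹ =
      ((lact (ξ u) (u⁻¹) : Gp) : G) * ((ξ (lact (ξ u) (u⁻¹)) : G))⁻¹ := by
    intro u
    have hz : lact (ξ u) (u⁻¹) = (ract u (η (u⁻¹)))⁻¹ := by
      have h := h7Lp u (u⁻¹)
      simpa using h
    calc ((u : G) * ((ξ u : G))⁻¹)⁻¹
        = (ξ u : G) * (((u⁻¹ : Gp)) : G) := by push_cast; group
      _ = ((lact (ξ u) (u⁻¹) : Gp) : G) * ((lrem (ξ u) (u⁻¹) : Gm) : G) := hl (ξ u) (u⁻¹)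
      _ = ((lact (ξ u) (u⁻¹) : Gp) : G) * ((ξ (lact (ξ u) (u⁻¹)) : G))⁻¹ := by
          rw [h5, hz]
          push_cast [map_inv]
          group
  have invχ : ∀ u : Gp,
      (((η u : G))⁻¹ * (u : G))⁻¹ =
      ((η (ract (u⁻¹) (η u)) : G))⁻¹ * ((ract (u⁻¹) (η u) : Gp) : G) := by
    intro u
    have ht : lact (ξ (u⁻¹)) u = (ract (u⁻¹) (η u))⁻¹ := by
      have h := h7Lp (u⁻¹) u
      simpa using h
    calc (((η u : G))⁻¹ * (u : G))⁻¹
        = (((u⁻¹ : Gp)) : G) * (η u : G) := by push_cast; group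
      _ = ((uact (u⁻¹) (η u) : Gm) : G) * ((ract (u⁻¹) (η u) : Gp) : G) := hr (u⁻¹) (η u)
      _ = ((η (ract (u⁻¹) (η u)) : G))⁻¹ * ((ract (u⁻¹) (η u) : Gp) : G) := by
          rw [h6, ht]
          push_cast [map_inv]
          group
  -- u * η(u)⁻¹ lies in {η(z)⁻¹ z}
  have hχψ : ∀ u : Gp,
      (u : G) * ((η u : G))⁻¹ =
      ((η (ract u (η (u⁻¹))) : G))⁻¹ * ((ract u (η (u⁻¹)) : Gp) : G) := by
    intro u
    calc (u : G) * ((η u : G))⁻¹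
        = (u : G) * ((η (u⁻¹) : Gm) : G) := by push_cast [map_inv]; group
      _ = ((uact u (η (u⁻¹)) : Gm) : G) * ((ract u (η (u⁻¹)) : Gp) : G) := hr u (η (u⁻¹))
      _ = ((η (ract u (η (u⁻¹))) : G))⁻¹ * ((ract u (η (u⁻¹)) : Gp) : G) := by
          rw [h6, h7Lp]
          push_cast [map_mul, map_inv]
          group
  have ψmem : ∀ u : Gp, ∃ z : Gp,
      (η u : G) * ((u : G))⁻¹ = ((η z : G))⁻¹ * (z : G) := by
    intro u
    refine ⟨ract ((ract u (η (u⁻¹)))⁻¹) (η (ract u (η (u⁻¹)))), ?_⟩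
    rw [← invχ (ract u (η (u⁻¹))), ← hχψ u]
    group
  -- conjugation rules
  have N1 : ∀ a u : Gp,
      (a : G) * ((u : G) * ((ξ u : G))⁻¹) * ((a : G))⁻¹ =
      (((ract (u⁻¹) (η (a⁻¹)))⁻¹ : Gp) : G) *
        ((ξ ((ract (u⁻¹) (η (a⁻¹)))⁻¹) : G))⁻¹ := by
    intro a u
    calc (a : G) * ((u : G) * ((ξ u : G))⁻¹) * ((a : G))⁻¹
        = (a : G) * (u : G) * (((ξ (u⁻¹) : Gm) : G) * (((a⁻¹ : Gp)) : G)) := by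
          push_cast [map_inv]; group
      _ = (a : G) * (u : G) *
            (((lact (ξ (u⁻¹)) (a⁻¹) : Gp) : G) * ((lrem (ξ (u⁻¹)) (a⁻¹) : Gm) : G)) := by
          rw [hl]
      _ = (((ract (u⁻¹) (η (a⁻¹)))⁻¹ : Gp) : G) *
            ((ξ ((ract (u⁻¹) (η (a⁻¹)))⁻¹) : G))⁻¹ := by
          rw [h5, h7Lp]
          push_cast [map_mul, map_inv]
          group
  have N2 : ∀ (x : Gm) (u : Gp),
      (x : G) * ((u : G) * ((ξ u : G))⁻¹) * ((x : G))⁻¹ =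
      ((lact x u : Gp) : G) * ((ξ (lact x u) : G))⁻¹ := by
    intro x u
    calc (x : G) * ((u : G) * ((ξ u : G))⁻¹) * ((x : G))⁻¹
        = ((x : G) * (u : G)) * ((x : G) * (ξ u : G))⁻¹ := by group
      _ = ((lact x u : Gp) : G) * ((lrem x u : Gm) : G) *
            ((ξ (lact x u) : G) * ((lrem x u : Gm) : G))⁻¹ := by rw [hl, ← h8]
      _ = ((lact x u : Gp) : G) * ((ξ (lact x u) : G))⁻¹ := by group
  have N1' : ∀ a u : Gp,
      (a : G) * (((η u : G))⁻¹ * (u : G)) * ((a : G))⁻¹ =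
      ((η (ract a (η (u⁻¹)) * u * a⁻¹) : G))⁻¹ * ((ract a (η (u⁻¹)) * u * a⁻¹ : Gp) : G) := by
    intro a u
    calc (a : G) * (((η u : G))⁻¹ * (u : G)) * ((a : G))⁻¹
        = ((a : G) * ((η (u⁻¹) : Gm) : G)) * (u : G) * ((a : G))⁻¹ := by
          push_cast [map_inv]; group
      _ = ((uact a (η (u⁻¹)) : Gm) : G) * ((ract a (η (u⁻¹)) : Gp) : G) * (u : G) *
            ((a : G))⁻¹ := by rw [hr]
      _ = ((η (ract a (η (u⁻¹)) * u * a⁻¹) : G))⁻¹ *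
            ((ract a (η (u⁻¹)) * u * a⁻¹ : Gp) : G) := by
          rw [h6, h7Lp]
          push_cast [map_mul, map_inv]
          group
  have N2' : ∀ (x : Gm) (u : Gp),
      (x : G) * (((η u : G))⁻¹ * (u : G)) * ((x : G))⁻¹ =
      (η (lact x (u⁻¹)) : G) * (((lact x (u⁻¹)) : Gp) : G)⁻¹ := by
    intro x u
    calc (x : G) * (((η u : G))⁻¹ * (u : G)) * ((x : G))⁻¹
        = ((x : G) * ((η (u⁻¹) : Gm) : G)) * (u : G) * ((x : G))⁻¹ := by
          push_cast [map_inv]; group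
      _ = ((η (lact x (u⁻¹)) : G) * ((lrem x (u⁻¹) : Gm) : G)) * (u : G) * ((x : G))⁻¹ := by
          rw [← h9]
      _ = (η (lact x (u⁻¹)) : G) * (((lact x (u⁻¹)) : Gp) : G)⁻¹ := by
          rw [hlL]
          push_cast [map_inv]
          group
  -- injectivity of parametrizations
  have injφ : ∀ u v : Gp,
      (u : G) * ((ξ u : G))⁻¹ = (v : G) * ((ξ v : G))⁻¹ → u = v := by
    intro u v h
    have h2 : (fun q : Gp × Gm => ((q.1 : G) * (q.2 : G))) (u, (ξ u)⁻¹) =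
        (fun q : Gp × Gm => ((q.1 : G) * (q.2 : G))) (v, (ξ v)⁻¹) := by
      simpa using h
    exact congrArg Prod.fst (hUF.injective h2)
  have injψ : ∀ u v : Gp,
      (η u : G) * ((u : G))⁻¹ = (η v : G) * ((v : G))⁻¹ → u = v := by
    intro u v h
    have h2 : (fun q : Gm × Gp => ((q.1 : G) * (q.2 : G))) (η u, u⁻¹) =
        (fun q : Gm × Gp => ((q.1 : G) * (q.2 : G))) (η v, v⁻¹) := by
      simpa using h
    have h3 := hUF'.injective h2
    have h4 : (u⁻¹ : Gp) = v⁻¹ := congrArg Prod.snd h3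
    exact inv_injective h4
  have injχ : ∀ u v : Gp,
      ((η u : G))⁻¹ * (u : G) = ((η v : G))⁻¹ * (v : G) → u = v := by
    intro u v h
    have h2 : (fun q : Gm × Gp => ((q.1 : G) * (q.2 : G))) ((η u)⁻¹, u) =
        (fun q : Gm × Gp => ((q.1 : G) * (q.2 : G))) ((η v)⁻¹, v) := by
      simpa using h
    exact congrArg Prod.snd (hUF'.injective h2)
  -- the two subgroups
  let H : Subgroup G :=
    { carrier := {g : G | ∃ u : Gp, g = (u : G) * ((ξ u : G))⁻¹}
      one_mem' := ⟨1, by simp⟩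
      mul_mem' := by
        rintro a b ⟨u, rfl⟩ ⟨v, rfl⟩
        exact ⟨_, mulH u v⟩
      inv_mem' := by
        rintro a ⟨u, rfl⟩
        exact ⟨_, invH u⟩ }
  let H' : Subgroup G :=
    { carrier := {g : G | ∃ u : Gp, g = ((η u : G))⁻¹ * (u : G)}
      one_mem' := ⟨1, by simp⟩
      mul_mem' := by
        rintro a b ⟨u, rfl⟩ ⟨v, rfl⟩
        exact ⟨_, mulχ u v⟩
      inv_mem' := by
        rintro a ⟨u, rfl⟩
        exact ⟨_, invχ u⟩ }
  have hN : H.Normal := by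
    constructor
    intro n hn g
    obtain ⟨u, rfl⟩ := hn
    obtain ⟨⟨a, x⟩, hg⟩ := hUF.surjective g
    have hg' : (a : G) * (x : G) = g := hg
    subst hg'
    refine ⟨(ract ((lact x u)⁻¹) (η (a⁻¹)))⁻¹, ?_⟩
    calc ((a : G) * (x : G)) * ((u : G) * ((ξ u : G))⁻¹) * (((a : G) * (x : G)))⁻¹
        = (a : G) * ((x : G) * ((u : G) * ((ξ u : G))⁻¹) * ((x : G))⁻¹) * ((a : G))⁻¹ := by
          group
      _ = (a : G) * (((lact x u : Gp) : G) * ((ξ (lact x u) : G))⁻¹) * ((a : G))⁻¹ := by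
          rw [N2]
      _ = _ := N1 a (lact x u)
  have hN' : H'.Normal := by
    constructor
    intro n hn g
    obtain ⟨u, rfl⟩ := hn
    obtain ⟨⟨a, x⟩, hg⟩ := hUF.surjective g
    have hg' : (a : G) * (x : G) = g := hg
    subst hg'
    have step : ((a : G) * (x : G)) * (((η u : G))⁻¹ * (u : G)) * (((a : G) * (x : G)))⁻¹ =
        (a : G) * ((η (lact x (u⁻¹)) : G) * (((lact x (u⁻¹)) : Gp) : G)⁻¹) * ((a : G))⁻¹ := by
      calc ((a : G) * (x : G)) * (((η u : G))⁻¹ * (u : G)) * (((a : G) * (x : G)))⁻¹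
          = (a : G) * ((x : G) * (((η u : G))⁻¹ * (u : G)) * ((x : G))⁻¹) * ((a : G))⁻¹ := by
            group
        _ = (a : G) * ((η (lact x (u⁻¹)) : G) * (((lact x (u⁻¹)) : Gp) : G)⁻¹) * ((a : G))⁻¹ := by
            rw [N2']
    rw [step]
    obtain ⟨z, hz⟩ := ψmem (lact x (u⁻¹))
    rw [hz]
    exact ⟨ract a (η (z⁻¹)) * z * a⁻¹, N1' a z⟩
  -- parametrizing bijections
  have memH : ∀ u : Gp, (u : G) * ((ξ u : G))⁻¹ ∈ H := fun u => ⟨u, rfl⟩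
  have memH' : ∀ u : Gp, ((η u : G))⁻¹ * (u : G) ∈ H' := fun u => ⟨u, rfl⟩
  have memψH' : ∀ u : Gp, (η u : G) * ((u : G))⁻¹ ∈ H' := fun u => ψmem u
  have eφbij : Function.Bijective
      (fun u : Gp => (⟨(u : G) * ((ξ u : G))⁻¹, memH u⟩ : H)) := by
    constructor
    · intro u v h
      exact injφ u v (congrArg Subtype.val h)
    · rintro ⟨g, u, rfl⟩
      exact ⟨u, rfl⟩
  let eφ : Gp ≃ H := Equiv.ofBijective _ eφbij
  have eχbij : Function.Bijective
      (fun u : Gp => (⟨((η u : G))⁻¹ * (u : G), memH' u⟩ : H')) := by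
    constructor
    · intro u v h
      exact injχ u v (congrArg Subtype.val h)
    · rintro ⟨g, u, rfl⟩
      exact ⟨u, rfl⟩
  let eχ : Gp ≃ H' := Equiv.ofBijective _ eχbij
  have eψinj : Function.Injective
      (fun u : Gp => (⟨(η u : G) * ((u : G))⁻¹, memψH' u⟩ : H')) := by
    intro u v h
    exact injψ u v (congrArg Subtype.val h)
  have eψbij : Function.Bijective
      (fun u : Gp => (⟨(η u : G) * ((u : G))⁻¹, memψH' u⟩ : H')) :=
    ⟨eψinj, (Finite.injective_iff_surjective_of_equiv eχ).mp eψinj⟩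
  let eψ : Gp ≃ H' := Equiv.ofBijective _ eψbij
  have hmul : ∀ h1 h2 : H, (eφ.symm.trans eψ) (h1 * h2) =
      (eφ.symm.trans eψ) h1 * (eφ.symm.trans eψ) h2 := by
    intro h1 h2
    obtain ⟨u, rfl⟩ := eφ.surjective h1
    obtain ⟨v, rfl⟩ := eφ.surjective h2
    have key : eφ u * eφ v = eφ (v * (ract (u⁻¹) (η v))⁻¹) := Subtype.ext (mulH u v)
    rw [key]
    simp only [Equiv.trans_apply, Equiv.symm_apply_apply]
    exact Subtype.ext (mulψ u v).symm
  refine ⟨H, H', hN, hN', rfl, rfl, ⟨⟨eφ.symm.trans eψ, hmul⟩, ?_⟩⟩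
  intro u hu
  show ((eψ (eφ.symm ⟨(u : G) * ((ξ u : G))⁻¹, hu⟩) : H') : G) = (η u : G) * ((u : G))⁻¹
  have h1 : (⟨(u : G) * ((ξ u : G))⁻¹, hu⟩ : H) = eφ u := rfl
  rw [h1, Equiv.symm_apply_apply]
  rfl
end

section
/- Let G = G₊G₋ be a unique factorization of a group and ξ, η : G₊ → G₋ group homomorphisms. If G₊' = {u·ξ(u)⁻¹ : u ∈ G₊} and G₊'' = {η(u)⁻¹·u : u ∈ G₊} are subgroups of G and the map F : G₊' → G₊'', F(u·ξ(u)⁻¹) = η(u)·u⁻¹, is a group homomorphism, then uv = (^{ξ(u)}v)·(u^{η(v)}) for all u, v ∈ G₊. -/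
/-- Let `G = G₊G₋` be a unique factorization, `ξ, η : G₊ → G₋` homomorphisms
such that `G₊' = {u·ξ(u)⁻¹}` and `G₊'' = {η(u)⁻¹·u}` are subgroups of `G` and
`F(u·ξ(u)⁻¹) = η(u)·u⁻¹` is multiplicative.  Then
`uv = (^{ξ(u)}v)·(u^{η(v)})` for all `u, v ∈ G₊`. -/
theorem stmt13 {G : Type*} [Group G] (Gp Gm : Subgroup G)
    (hUF : Function.Bijective (fun q : Gp × Gm => ((q.1 : G) * (q.2 : G))))
    (hUF' : Function.Bijective (fun q : Gm × Gp => ((q.1 : G) * (q.2 : G))))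
    (lact : Gm → Gp → Gp) (lrem : Gm → Gp → Gm)
    (uact : Gp → Gm → Gm) (ract : Gp → Gm → Gp)
    (hl : ∀ (x : Gm) (u : Gp), (x : G) * (u : G) = (lact x u : G) * (lrem x u : G))
    (hr : ∀ (u : Gp) (x : Gm), (u : G) * (x : G) = (uact u x : G) * (ract u x : G))
    (ξ η : Gp →* Gm)
    (hS' : ∃ H : Subgroup G,
      (H : Set G) = {g : G | ∃ u : Gp, g = (u : G) * ((ξ u : G))⁻¹})
    (hS'' : ∃ H : Subgroup G,
      (H : Set G) = {g : G | ∃ u : Gp, g = ((η u : G))⁻¹ * (u : G)})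
    (hF : ∀ u v w : Gp,
      ((u : G) * ((ξ u : G))⁻¹) * ((v : G) * ((ξ v : G))⁻¹) = (w : G) * ((ξ w : G))⁻¹ →
      (η w : G) * ((w : G))⁻¹ =
        ((η u : G) * ((u : G))⁻¹) * ((η v : G) * ((v : G))⁻¹)) :
    ∀ u v : Gp, (u : G) * (v : G) = (lact (ξ u) v : G) * (ract u (η v) : G) := by
  intro u v
  obtain ⟨H, hH⟩ := hS'
  set p := lact (ξ u) v with hp
  set m := lrem (ξ u) v with hm
  have hpm := hl (ξ u) v
  set n := uact u (η v) with hn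
  set q := ract u (η v) with hq
  have hnq := hr u (η v)
  -- membership of the two generators in H
  have h1 : ((u⁻¹ : Gp) : G) * ((ξ u⁻¹ : G))⁻¹ ∈ H := by
    rw [← SetLike.mem_coe, hH]; exact ⟨u⁻¹, rfl⟩
  have h2 : ((v : G)) * ((ξ v : G))⁻¹ ∈ H := by
    rw [← SetLike.mem_coe, hH]; exact ⟨v, rfl⟩
  have h3 := H.mul_mem h1 h2
  rw [← SetLike.mem_coe, hH] at h3
  obtain ⟨w, hw⟩ := h3
  have hFw := hF u⁻¹ v w hw
  push_cast [map_inv, inv_inv] at hFw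
  -- rewrite the product in the form (Gp element) * (Gm element)
  have hX : ((u⁻¹ : Gp) : G) * ((ξ u⁻¹ : G))⁻¹ * ((v : G) * ((ξ v : G))⁻¹)
      = ((u : G))⁻¹ * (p : G) * ((m : G) * ((ξ v : G))⁻¹) := by
    have e1 : ((ξ u⁻¹ : G))⁻¹ = (ξ u : G) := by
      rw [map_inv]; push_cast; group
    rw [e1]
    push_cast
    calc ((u : G))⁻¹ * (ξ u : G) * ((v : G) * ((ξ v : G))⁻¹)
        = ((u : G))⁻¹ * (((ξ u : G) * (v : G)) * ((ξ v : G))⁻¹) := by group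
      _ = ((u : G))⁻¹ * (((p : G) * (m : G)) * ((ξ v : G))⁻¹) := by rw [hpm]
      _ = ((u : G))⁻¹ * (p : G) * ((m : G) * ((ξ v : G))⁻¹) := by group
  -- identify w via uniqueness of the Gp × Gm factorization
  have h4 : (fun r : Gp × Gm => ((r.1 : G) * (r.2 : G))) (w, (ξ w)⁻¹)
      = (fun r : Gp × Gm => ((r.1 : G) * (r.2 : G))) (u⁻¹ * p, m * (ξ v)⁻¹) := by
    simp only
    push_cast
    exact hw.symm.trans hX
  have hwp : w = u⁻¹ * p := congrArg Prod.fst (hUF.1 h4)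
  have hW : (w : G) = ((u : G))⁻¹ * (p : G) := by rw [hwp]; push_cast; group
  -- the key identity from multiplicativity of F
  have hEW : (η w : G) = ((η u : G))⁻¹ * (u : G) * ((η v : G) * ((v : G))⁻¹) * (w : G) :=
    mul_inv_eq_iff_eq_mul.mp hFw
  have h5 : (fun r : Gm × Gp => ((r.1 : G) * (r.2 : G))) (η u * η w, p⁻¹ * u * v)
      = (fun r : Gm × Gp => ((r.1 : G) * (r.2 : G))) (n, q) := by
    simp only
    push_cast
    rw [hEW, hW, ← hnq]
    group
  have h6 : p⁻¹ * u * v = q := congrArg Prod.snd (hUF'.1 h5)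
  have h7 : ((p : G))⁻¹ * (u : G) * (v : G) = (q : G) := by
    rw [← h6]; push_cast; group
  rw [← h7]
  group
end

section
/- Let G = G₊G₋ be a unique factorization of a group and ξ : G₊ → G₋ a group homomorphism such that uv = (^{ξ(u)}v)(u^{ξ(v)}) for all u, v ∈ G₊ and ξ(^{x}u)(x^{u}) = x·ξ(u) for all x ∈ G₋, u ∈ G₊. Then ξ(u)^{v} = ξ(u^{ξ(v)}) for all u, v ∈ G₊. -/
/-- Let `G = G₊G₋` be a unique factorization and `ξ : G₊ → G₋` a homomorphism
such that `uv = (^{ξ(u)}v)(u^{ξ(v)})` for all `u, v ∈ G₊` and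
`ξ(^{x}u)(x^{u}) = x·ξ(u)` for all `x ∈ G₋, u ∈ G₊`.  Then
`ξ(u)^{v} = ξ(u^{ξ(v)})` for all `u, v ∈ G₊`. -/
theorem stmt14 {G : Type*} [Group G] (Gp Gm : Subgroup G)
    (hUF : Function.Bijective (fun q : Gp × Gm => ((q.1 : G) * (q.2 : G))))
    (hUF' : Function.Bijective (fun q : Gm × Gp => ((q.1 : G) * (q.2 : G))))
    (lact : Gm → Gp → Gp) (lrem : Gm → Gp → Gm)
    (uact : Gp → Gm → Gm) (ract : Gp → Gm → Gp)
    (hl : ∀ (x : Gm) (u : Gp), (x : G) * (u : G) = (lact x u : G) * (lrem x u : G))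
    (hr : ∀ (u : Gp) (x : Gm), (u : G) * (x : G) = (uact u x : G) * (ract u x : G))
    (ξ : Gp →* Gm)
    (h7 : ∀ u v : Gp, (u : G) * (v : G) = (lact (ξ u) v : G) * (ract u (ξ v) : G))
    (h8 : ∀ (x : Gm) (u : Gp), (ξ (lact x u) : G) * (lrem x u : G) = (x : G) * (ξ u : G)) :
    ∀ u v : Gp, lrem (ξ u) v = ξ (ract u (ξ v)) := by
  intro u v
  have huv : u * v = lact (ξ u) v * ract u (ξ v) := by
    ext
    simpa using h7 u v
  have key : (ξ (lact (ξ u) v) : G) * (lrem (ξ u) v : G)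
      = (ξ (lact (ξ u) v) : G) * (ξ (ract u (ξ v)) : G) := by
    rw [h8]
    have : ξ u * ξ v = ξ (lact (ξ u) v) * ξ (ract u (ξ v)) := by
      rw [← map_mul, ← map_mul, huv]
    exact_mod_cast this
  ext
  exact mul_left_cancel key
end

section
/- Let G = G₊G₋ and G = G₊'G₋ be two unique factorizations of a group G with the same subgroup G₋. Let σ : G₊ → G₋ be the map defined by G₊' = {σ(u)·u : u ∈ G₊}. Then for all u, v ∈ G₊: σ((u^{σ(v)})·v) = σ(u)·(^{u}σ(v)), where the dressing actions are those of the factorization G = G₊G₋ (for u ∈ G₊, x ∈ G₋: ux = (^{u}x)(u^{x}) with ^{u}x ∈ G₋, u^{x} ∈ G₊). -/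
/-- Let `G = G₋G₊` and `G = G₋G₊'` be two unique factorizations of `G` with the
same `G₋`, and let `σ : G₊ → G₋` be defined by `G₊' = {σ(u)·u : u ∈ G₊}`.
Then `σ((u^{σ(v)})·v) = σ(u)·(^{u}σ(v))` for all `u, v ∈ G₊`, where
`u·x = (^{u}x)(u^{x})` with `^{u}x ∈ G₋` (`uact u x`) and `u^{x} ∈ G₊`
(`ract u x`). -/
theorem stmt15 {G : Type*} [Group G] (Gp Gp' Gm : Subgroup G)
    (hUF : Function.Bijective (fun q : Gm × Gp => ((q.1 : G) * (q.2 : G))))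
    (hUF' : Function.Bijective (fun q : Gm × Gp' => ((q.1 : G) * (q.2 : G))))
    (σ : Gp → Gm)
    (hσ : (Gp' : Set G) = {g : G | ∃ u : Gp, g = (σ u : G) * (u : G)})
    (uact : Gp → Gm → Gm) (ract : Gp → Gm → Gp)
    (hr : ∀ (u : Gp) (x : Gm), (u : G) * (x : G) = (uact u x : G) * (ract u x : G)) :
    ∀ u v : Gp, σ (ract u (σ v) * v) = σ u * uact u (σ v) := by
  intro u v
  have hu' : ((σ u : G) * u) ∈ Gp' := by
    rw [← SetLike.mem_coe, hσ]; exact ⟨u, rfl⟩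
  have hv' : ((σ v : G) * v) ∈ Gp' := by
    rw [← SetLike.mem_coe, hσ]; exact ⟨v, rfl⟩
  have hmul := mul_mem hu' hv'
  rw [← SetLike.mem_coe, hσ] at hmul
  obtain ⟨w, hw⟩ := hmul
  have key : (σ u : G) * u * ((σ v : G) * v)
      = ((σ u * uact u (σ v) : Gm) : G) * ((ract u (σ v) * v : Gp) : G) := by
    push_cast
    rw [mul_assoc ((σ u : G)), ← mul_assoc ((u:G)), hr u (σ v)]
    group
  have hw' : ((σ w, w) : Gm × Gp) = (σ u * uact u (σ v), ract u (σ v) * v) := by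
    apply hUF.injective
    simp only
    rw [← key, ← hw]
  have h1 : σ w = σ u * uact u (σ v) := congrArg Prod.fst hw'
  have h2 : w = ract u (σ v) * v := congrArg Prod.snd hw'
  rw [← h2]; exact h1
end

section
/- Let G₊ be a group and suppose ξ, η : G₊ → Perm(G₊) arise from a unique factorization setup satisfying uv = (^{ξ(u)}v)(u^{η(v)}). Define a new binary operation on G₊ by u ⋆ v = u·(^{ξ(u)⁻¹}v) (where ^{x}v denotes the left dressing action of x ∈ G₋ on v ∈ G₊). If G₊' = {u·ξ(u)⁻¹ : u ∈ G₊} is a subgroup of G, then (G₊, ⋆) is a group and the map u ↦ u·ξ(u)⁻¹ : (G₊, ⋆) → G₊' is a group isomorphism. -/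
/-- Let `G = G₊G₋` be a unique factorization, `ξ : G₊ → G₋` a homomorphism, and
suppose `G₊' = {u·ξ(u)⁻¹ : u ∈ G₊}` is a subgroup `H` of `G`.  Then the
operation `u ⋆ v = u·(^{ξ(u)⁻¹}v)` makes `G₊` into a group (associative, with
`1` as two-sided identity and with two-sided inverses), and
`u ↦ u·ξ(u)⁻¹ : (G₊, ⋆) → G₊'` is a group isomorphism. -/
theorem stmt16 {G : Type*} [Group G] (Gp Gm : Subgroup G)
    (hUF : Function.Bijective (fun q : Gp × Gm => ((q.1 : G) * (q.2 : G))))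
    (hUF' : Function.Bijective (fun q : Gm × Gp => ((q.1 : G) * (q.2 : G))))
    (lact : Gm → Gp → Gp) (lrem : Gm → Gp → Gm)
    (hl : ∀ (x : Gm) (u : Gp), (x : G) * (u : G) = (lact x u : G) * (lrem x u : G))
    (ξ : Gp →* Gm)
    (H : Subgroup G)
    (hH : (H : Set G) = {g : G | ∃ u : Gp, g = (u : G) * ((ξ u : G))⁻¹}) :
    (∀ u v w : Gp,
      ((u * lact (ξ u)⁻¹ v) * lact (ξ (u * lact (ξ u)⁻¹ v))⁻¹ w) =
        u * lact (ξ u)⁻¹ (v * lact (ξ v)⁻¹ w)) ∧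
    (∀ u : Gp, (1 : Gp) * lact (ξ (1 : Gp))⁻¹ u = u ∧ u * lact (ξ u)⁻¹ 1 = u) ∧
    (∀ u : Gp, ∃ w : Gp,
      u * lact (ξ u)⁻¹ w = 1 ∧ w * lact (ξ w)⁻¹ u = 1) ∧
    (∃ e : Gp ≃ H, (∀ u : Gp, ((e u : H) : G) = (u : G) * ((ξ u : G))⁻¹) ∧
      ∀ u v : Gp, e (u * lact (ξ u)⁻¹ v) = e u * e v) := by
  set φ : Gp → G := fun u => (u : G) * ((ξ u : G))⁻¹ with hφ
  have hφH : ∀ u : Gp, φ u ∈ H := by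
    intro u
    have : φ u ∈ (H : Set G) := by rw [hH]; exact ⟨u, rfl⟩
    exact this
  have hφinj : Function.Injective φ := by
    intro u v huv
    have h : (fun q : Gp × Gm => ((q.1 : G) * (q.2 : G))) (u, (ξ u)⁻¹)
        = (fun q : Gp × Gm => ((q.1 : G) * (q.2 : G))) (v, (ξ v)⁻¹) := by
      simpa [hφ] using huv
    have := hUF.injective h
    exact congrArg Prod.fst this
  have hφ1 : φ 1 = 1 := by simp [hφ]
  have key : ∀ u v : Gp, φ (u * lact (ξ u)⁻¹ v) = φ u * φ v := by
    intro u v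
    have h1 := hl (ξ u)⁻¹ v
    have hfac : φ u * φ v =
        ((u * lact (ξ u)⁻¹ v : Gp) : G) *
          ((lrem (ξ u)⁻¹ v * (ξ v)⁻¹ : Gm) : G) := by
      push_cast
      push_cast at h1
      rw [hφ]
      simp only
      rw [mul_assoc, ← mul_assoc ((ξ u : G))⁻¹, h1]
      group
    have hmem : φ u * φ v ∈ (H : Set G) := H.mul_mem (hφH u) (hφH v)
    rw [hH] at hmem
    obtain ⟨w, hw⟩ := hmem
    have hpair : (((u * lact (ξ u)⁻¹ v : Gp), (lrem (ξ u)⁻¹ v * (ξ v)⁻¹ : Gm)) : Gp × Gm)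
        = ((w, (ξ w)⁻¹) : Gp × Gm) := by
      apply hUF.injective
      simp only
      rw [← hfac, hw]
      push_cast
      ring_nf
    have h1' : (u * lact (ξ u)⁻¹ v : Gp) = w := congrArg Prod.fst hpair
    rw [hφ]
    simp only
    rw [h1', ← hw]
  refine ⟨?_, ?_, ?_, ?_⟩
  · intro u v w
    apply hφinj
    rw [key, key, key, key, mul_assoc]
  · intro u
    constructor
    · apply hφinj; rw [key, hφ1, one_mul]
    · apply hφinj; rw [key, hφ1, mul_one]
  · intro u
    have hmem : (φ u)⁻¹ ∈ (H : Set G) := H.inv_mem (hφH u)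
    rw [hH] at hmem
    obtain ⟨w, hw⟩ := hmem
    have hw' : φ w = (φ u)⁻¹ := hw.symm
    exact ⟨w, hφinj (by rw [key, hw', mul_inv_cancel, hφ1]),
      hφinj (by rw [key, hw', inv_mul_cancel, hφ1])⟩
  · have hψbij : Function.Bijective (fun u : Gp => (⟨φ u, hφH u⟩ : H)) := by
      constructor
      · intro u v huv
        exact hφinj (congrArg Subtype.val huv)
      · intro ⟨g, hg⟩
        have hg' : g ∈ (H : Set G) := hg
        rw [hH] at hg'
        obtain ⟨u, hu⟩ := hg'
        exact ⟨u, by simp [hφ, hu.symm]⟩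
    refine ⟨Equiv.ofBijective _ hψbij, fun u => rfl, fun u v => ?_⟩
    apply Subtype.ext
    show φ (u * lact (ξ u)⁻¹ v) = φ u * φ v
    exact key u v
end
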